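/- Let f : Fin N → L on the linear domain, and suppose the level set L_l = {i | f i = l} contains exactly k_min flat local minima and k_max flat interior local maxima (and no other flats). Then the number of connected components of {i | f i ≤ l} equals the number of connected components of {i | f i < l} plus k_min minus k_max. In particular, if k_min = k_max, the number of connected components is unchanged when the level l is included. -/

import Mathlib

/-- One adjacency step inside a subset `S` of the linear domain `Fin N`. -/
def AdjStep {N : ℕ} (S : Set (Fin N)) (x y : Fin N) : Prop :=
  x ∈ S ∧ y ∈ S ∧ (x.val + 1 = y.val ∨ y.val + 1 = x.val)

/-- `a` and `b` are joined by a chain of adjacent elements staying in `S`. -/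
def ConnectedIn {N : ℕ} (S : Set (Fin N)) (a b : Fin N) : Prop :=
  Relation.ReflTransGen (AdjStep S) a b

/-- `C` is a connected component of `S`. -/
def IsConnComp {N : ℕ} (S C : Set (Fin N)) : Prop :=
  ∃ a, a ∈ S ∧ C = {b | ConnectedIn S a b}

/-- A flat local minimum of `f` starting at `s` of length `k`: a run of `k`
consecutive equal values whose existing outer neighbors are strictly higher. -/
def MinFlat {N : ℕ} {L : Type*} [LinearOrder L] (f : Fin N → L) (s : Fin N) (k : ℕ) : Prop :=
  0 < k ∧ s.val + k ≤ N ∧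
  (∀ j : Fin N, s.val ≤ j.val → j.val < s.val + k → f j = f s) ∧
  (∀ j : Fin N, j.val + 1 = s.val → f s < f j) ∧
  (∀ j : Fin N, j.val = s.val + k → f s < f j)

/-- A flat interior local maximum of `f` starting at `s` of length `k`: a run
away from the boundary indices `0` and `N-1` with both outer neighbors strictly
lower. -/
def IntMaxFlat {N : ℕ} {L : Type*} [LinearOrder L] (f : Fin N → L) (s : Fin N) (k : ℕ) : Prop :=
  0 < k ∧ 0 < s.val ∧ s.val + k ≤ N - 1 ∧
  (∀ j : Fin N, s.val ≤ j.val → j.val < s.val + k → f j = f s) ∧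
  (∀ j : Fin N, j.val + 1 = s.val → f j < f s) ∧
  (∀ j : Fin N, j.val = s.val + k → f j < f s)

/-- A maximal flat of the level set of `f` at level `l`. -/
def MaxlFlat {N : ℕ} {L : Type*} [LinearOrder L]
    (f : Fin N → L) (s : Fin N) (k : ℕ) (l : L) : Prop :=
  0 < k ∧ s.val + k ≤ N ∧
  (∀ j : Fin N, s.val ≤ j.val → j.val < s.val + k → f j = l) ∧
  (∀ j : Fin N, j.val + 1 = s.val → f j ≠ l) ∧
  (∀ j : Fin N, j.val = s.val + k → f j ≠ l)

/-!
On a path, the connected components of a set correspond to the left ends of its maximal runs.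
Sort the left ends `i` of runs of `{f ≤ l}` and of `{f < l}` by `f i` and by the value at the
predecessor `i - 1` (for `i = 0` there is none, which acts like a predecessor above `l`):
* `f i < l < f (i - 1)`: a left end for both sets;
* `f i = l < f (i - 1)`: a left end for `≤` only. It starts a maximal flat at level `l` entered
  from above, so this flat is a minimum;
* `f i < l = f (i - 1)`: a left end for `<` only. It sits just right of a maximal flat at level
  `l` left downwards, so this flat is an interior maximum, and `i` determines the flat.
-/

variable {N : ℕ} {S : Set (Fin N)}

instance (S : Set (Fin N)) : Std.Symm (AdjStep S) :=
  ⟨fun _ _ ⟨hx, hy, h⟩ => ⟨hy, hx, h.symm⟩⟩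

theorem ConnectedIn.symm {a b : Fin N} (h : ConnectedIn S a b) : ConnectedIn S b a :=
  Std.Symm.symm (r := Relation.ReflTransGen (AdjStep S)) _ _ h

theorem ConnectedIn.trans {a b c : Fin N} (h : ConnectedIn S a b) (h' : ConnectedIn S b c) :
    ConnectedIn S a c :=
  Relation.ReflTransGen.trans h h'

theorem ConnectedIn.mem_of_between {a b c : Fin N} (h : ConnectedIn S a b) (ha : a ∈ S)
    (hc : a.val ≤ c.val ∧ c.val ≤ b.val ∨ b.val ≤ c.val ∧ c.val ≤ a.val) : c ∈ S := by
  induction h generalizing c with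
  | refl => exact (Fin.ext (by omega) : a = c) ▸ ha
  | @tail b b' _ hstep ih =>
    obtain ⟨-, hb', hadj⟩ := hstep
    by_cases hcb' : c.val = b'.val
    · exact (Fin.ext hcb'.symm : b' = c) ▸ hb'
    · exact ih (by omega)

theorem Fin.val_orderSucc_of_lt {i j : Fin N} (h : i < j) : (Order.succ i).val = i.val + 1 := by
  have hlt : i.val < (Order.succ i).val :=
    Fin.lt_def.1 (Order.lt_succ_of_not_isMax (not_isMax_of_lt h))
  have hle : (Order.succ i).val ≤ i.val + 1 :=
    Fin.le_def.1 <| Order.succ_le_of_lt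
      (show i < ⟨i.val + 1, by omega⟩ from Fin.lt_def.2 i.val.lt_succ_self)
  omega

theorem connectedIn_of_forall_mem {a b : Fin N} (hab : a.val ≤ b.val)
    (h : ∀ c : Fin N, a.val ≤ c.val → c.val ≤ b.val → c ∈ S) : ConnectedIn S a b := by
  refine reflTransGen_of_succ_of_le _ (fun i ⟨hai, hib⟩ => ?_) (Fin.le_def.2 hab)
  have hsucc := Fin.val_orderSucc_of_lt hib
  exact ⟨h i hai (by omega), h _ (by omega) (by omega), Or.inl hsucc.symm⟩

def runStarts (S : Set (Fin N)) : Set (Fin N) :=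
  {i | i ∈ S ∧ ∀ j : Fin N, j.val + 1 = i.val → j ∉ S}

theorem ConnectedIn.le_of_mem_runStarts {a b : Fin N} (h : ConnectedIn S a b) (ha : a ∈ S)
    (hb : b ∈ runStarts S) : b.val ≤ a.val := by
  by_contra! hab
  exact hb.2 ⟨b.val - 1, by omega⟩ (by simp; omega) (h.mem_of_between ha (by simp; omega))

-- `MaxlFlat f s k l` unfolds to `IsMaximalRun {i | f i = l} s k`.
def IsMaximalRun (S : Set (Fin N)) (s : Fin N) (k : ℕ) : Prop :=
  0 < k ∧ s.val + k ≤ N ∧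
  (∀ j : Fin N, s.val ≤ j.val → j.val < s.val + k → j ∈ S) ∧
  (∀ j : Fin N, j.val + 1 = s.val → j ∉ S) ∧
  (∀ j : Fin N, j.val = s.val + k → j ∉ S)

theorem IsMaximalRun.mem {s j : Fin N} {k : ℕ} (h : IsMaximalRun S s k) (hsj : s.val ≤ j.val)
    (hjk : j.val < s.val + k) : j ∈ S :=
  h.2.2.1 j hsj hjk

-- The run through `i` reaches left to the least `a` with `[a, i] ⊆ S` and right to the first
-- index after `i` outside `S`.
theorem exists_isMaximalRun_of_mem {i : Fin N} (hi : i ∈ S) :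
    ∃ s k, IsMaximalRun S s k ∧ s.val ≤ i.val ∧ i.val < s.val + k := by
  classical
  have hleft : ∃ a, ∀ c : Fin N, a ≤ c.val → c.val ≤ i.val → c ∈ S :=
    ⟨i, fun c h₁ h₂ => (Fin.ext (by omega) : i = c) ▸ hi⟩
  have hright : ∃ b, i.val < b ∧ ∀ c : Fin N, c.val = b → c ∉ S :=
    ⟨N, i.isLt, fun c hc => by omega⟩
  have hai : Nat.find hleft ≤ i.val :=
    Nat.find_min' hleft fun c h₁ h₂ => (Fin.ext (by omega) : i = c) ▸ hi
  have hbN : Nat.find hright ≤ N := Nat.find_min' hright ⟨i.isLt, fun c hc => by omega⟩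
  obtain ⟨hib, hbS⟩ := Nat.find_spec hright
  refine ⟨⟨Nat.find hleft, by omega⟩, Nat.find hright - Nat.find hleft,
    ⟨by omega, by simp; omega, fun c h₁ h₂ => ?_, fun j hj hjS => ?_, fun j hj => hbS j ?_⟩,
    hai, by simp; omega⟩
  · simp only at h₁ h₂
    rcases le_or_gt c.val i.val with hci | hic
    · exact Nat.find_spec hleft c h₁ hci
    · by_contra hc
      exact Nat.find_min hright (show c.val < Nat.find hright by omega)
        ⟨hic, fun c' hc' => (Fin.ext hc' : c' = c) ▸ hc⟩
  · simp only at hj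
    have : Nat.find hleft ≤ j.val := Nat.find_min' hleft fun c h₁ h₂ => by
      rcases eq_or_ne c.val j.val with hcj | hcj
      · exact (Fin.ext hcj : c = j) ▸ hjS
      · exact Nat.find_spec hleft c (by omega) h₂
    omega
  · simp only at hj; omega

theorem IsMaximalRun.eq_of_mem {s s' i : Fin N} {k k' : ℕ} (h : IsMaximalRun S s k)
    (h' : IsMaximalRun S s' k') (hi : s.val ≤ i.val ∧ i.val < s.val + k)
    (hi' : s'.val ≤ i.val ∧ i.val < s'.val + k') : s = s' ∧ k = k' := by
  obtain ⟨-, hkN, hrun, hleft, hright⟩ := h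
  obtain ⟨-, hkN', hrun', hleft', hright'⟩ := h'
  have hss' : s = s' := by
    by_contra hne
    rcases Nat.lt_or_gt_of_ne (Fin.val_ne_of_ne hne) with hlt | hlt
    · exact hleft' ⟨s'.val - 1, by omega⟩ (by simp; omega)
        (hrun _ (by simp; omega) (by simp; omega))
    · exact hleft ⟨s.val - 1, by omega⟩ (by simp; omega)
        (hrun' _ (by simp; omega) (by simp; omega))
  subst hss'
  refine ⟨rfl, ?_⟩
  by_contra hne
  rcases Nat.lt_or_gt_of_ne hne with hlt | hlt
  · exact hright ⟨s.val + k, by omega⟩ rfl (hrun' _ (by simp) (by simp; omega))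
  · exact hright' ⟨s.val + k', by omega⟩ rfl (hrun _ (by simp) (by simp; omega))

theorem IsMaximalRun.start_mem_runStarts {s : Fin N} {k : ℕ} (h : IsMaximalRun S s k) :
    s ∈ runStarts S :=
  ⟨h.mem le_rfl (Nat.lt_add_of_pos_right h.1), h.2.2.2.1⟩

theorem IsMaximalRun.length_eq {s : Fin N} {k k' : ℕ} (h : IsMaximalRun S s k)
    (h' : IsMaximalRun S s k') : k = k' :=
  (h.eq_of_mem h' ⟨le_rfl, Nat.lt_add_of_pos_right h.1⟩
    ⟨le_rfl, Nat.lt_add_of_pos_right h'.1⟩).2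

theorem exists_isMaximalRun_of_mem_runStarts {s : Fin N} (hs : s ∈ runStarts S) :
    ∃ k, IsMaximalRun S s k := by
  obtain ⟨s', k, hrun, hs's, hss'⟩ := exists_isMaximalRun_of_mem hs.1
  obtain rfl : s' = s := Fin.ext <| le_antisymm hs's <| by
    by_contra! hlt
    exact hs.2 ⟨s.val - 1, by omega⟩ (by simp; omega)
      (hrun.mem (by simp; omega) (by simp; omega))
  exact ⟨k, hrun⟩

theorem exists_isMaximalRun_of_succ_not_mem {i j : Fin N} (hj : j ∈ S) (hi : i ∉ S)
    (hji : j.val + 1 = i.val) : ∃ s k, IsMaximalRun S s k ∧ s.val + k = i.val := by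
  obtain ⟨s, k, hrun, hsj, hjs⟩ := exists_isMaximalRun_of_mem hj
  refine ⟨s, k, hrun, le_antisymm ?_ (by omega)⟩
  by_contra! hlt
  exact hi (hrun.mem (by omega) hlt)

theorem ncard_setOf_isConnComp (S : Set (Fin N)) :
    {C | IsConnComp S C}.ncard = (runStarts S).ncard := by
  symm
  refine Set.ncard_congr (fun i _ => {b | ConnectedIn S i b}) (fun i hi => ⟨i, hi.1, rfl⟩)
    (fun i j hi hj hij => ?_) ?_
  · have hij : ConnectedIn S i j := by
      have hjj : j ∈ {b | ConnectedIn S j b} := Relation.ReflTransGen.refl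
      rwa [← hij] at hjj
    exact Fin.ext <| le_antisymm (hij.symm.le_of_mem_runStarts hj.1 hi)
      (hij.le_of_mem_runStarts hi.1 hj)
  · rintro _ ⟨a, ha, rfl⟩
    obtain ⟨s, k, hrun, hsa, has⟩ := exists_isMaximalRun_of_mem ha
    have hsa' : ConnectedIn S s a :=
      connectedIn_of_forall_mem hsa fun c hsc hca => hrun.mem hsc (by omega)
    exact ⟨s, hrun.start_mem_runStarts,
      Set.ext fun b => ⟨hsa'.symm.trans, hsa'.trans⟩⟩

section Level

variable {L : Type*} [LinearOrder L] {f : Fin N → L} {l : L}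

theorem IntMaxFlat.end_lt {s : Fin N} {k : ℕ} (h : IntMaxFlat f s k) : s.val + k < N := by
  have := h.2.2.1
  omega

theorem IntMaxFlat.isMaximalRun {s : Fin N} {k : ℕ} (h : IntMaxFlat f s k) :
    IsMaximalRun {i | f i = f s} s k :=
  ⟨h.1, h.end_lt.le, h.2.2.2.1, fun j hj => (h.2.2.2.2.1 j hj).ne,
    fun j hj => (h.2.2.2.2.2 j hj).ne⟩

variable (f l)

def dropsAcross : Set (Fin N) := {i | f i < l ∧ ∀ j : Fin N, j.val + 1 = i.val → l < f j}

def dropsOnto : Set (Fin N) := {i | f i = l ∧ ∀ j : Fin N, j.val + 1 = i.val → l < f j}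

def dropsFrom : Set (Fin N) := {i | f i < l ∧ ∃ j : Fin N, j.val + 1 = i.val ∧ f j = l}

theorem runStarts_setOf_le :
    runStarts {i | f i ≤ l} = dropsAcross f l ∪ dropsOnto f l := by
  ext i
  simp only [runStarts, dropsAcross, dropsOnto, Set.mem_ofPred_eq, Set.mem_union, not_le]
  rw [le_iff_lt_or_eq, or_and_right]

theorem runStarts_setOf_lt :
    runStarts {i | f i < l} = dropsAcross f l ∪ dropsFrom f l := by
  ext i
  simp only [runStarts, dropsAcross, dropsFrom, Set.mem_ofPred_eq, Set.mem_union, not_lt]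
  constructor
  · rintro ⟨hi, hpred⟩
    by_cases hlevel : ∃ j : Fin N, j.val + 1 = i.val ∧ f j = l
    · exact Or.inr ⟨hi, hlevel⟩
    · simp only [not_exists, not_and] at hlevel
      exact Or.inl ⟨hi, fun j hj => (hpred j hj).lt_of_ne' (hlevel j hj)⟩
  · rintro (⟨hi, habove⟩ | ⟨hi, j, hj, hjl⟩)
    · exact ⟨hi, fun j hj => (habove j hj).le⟩
    · refine ⟨hi, fun j' hj' => ?_⟩
      obtain rfl : j' = j := Fin.ext (by omega)
      exact hjl.ge

theorem disjoint_dropsAcross_dropsOnto : Disjoint (dropsAcross f l) (dropsOnto f l) :=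
  Set.disjoint_left.2 fun _ hA hB => hA.1.ne hB.1

theorem disjoint_dropsAcross_dropsFrom : Disjoint (dropsAcross f l) (dropsFrom f l) :=
  Set.disjoint_left.2 fun _ hA ⟨_, j, hj, hjl⟩ => (hA.2 j hj).ne' hjl

variable {f l}

theorem IntMaxFlat.mem_dropsFrom {s i : Fin N} {k : ℕ} (h : IntMaxFlat f s k) (hs : f s = l)
    (hi : i.val = s.val + k) : i ∈ dropsFrom f l := by
  obtain ⟨hk, -, -, hflat, -, hright⟩ := h
  subst hs
  exact ⟨hright i hi, ⟨i.val - 1, by omega⟩, by simp; omega,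
    hflat _ (by simp; omega) (by simp; omega)⟩

theorem dropsOnto_eq (honly : ∀ s k, MaxlFlat f s k l → MinFlat f s k ∨ IntMaxFlat f s k) :
    dropsOnto f l = {s | ∃ k, MinFlat f s k ∧ f s = l} := by
  ext s
  constructor
  · rintro ⟨hs, habove⟩
    obtain ⟨k, hrun⟩ := exists_isMaximalRun_of_mem_runStarts (S := {i | f i = l})
      ⟨hs, fun j hj => (habove j hj).ne'⟩
    rcases honly s k hrun with hmin | ⟨-, hs0, -, -, hbelow, -⟩
    · exact ⟨k, hmin, hs⟩
    · have hpred : (⟨s.val - 1, by omega⟩ : Fin N).val + 1 = s.val := by simp; omega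
      exact absurd (habove _ hpred) (hs ▸ hbelow _ hpred).not_gt
  · rintro ⟨k, ⟨-, -, -, habove, -⟩, hs⟩
    exact ⟨hs, fun j hj => hs ▸ habove j hj⟩

theorem ncard_dropsFrom (honly : ∀ s k, MaxlFlat f s k l → MinFlat f s k ∨ IntMaxFlat f s k) :
    (dropsFrom f l).ncard = {s | ∃ k, IntMaxFlat f s k ∧ f s = l}.ncard := by
  have hrun {s : Fin N} {k : ℕ} (h : IntMaxFlat f s k) (hs : f s = l) :
      IsMaximalRun {i | f i = l} s k :=
    hs ▸ h.isMaximalRun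
  symm
  refine Set.ncard_congr (fun s hs => ⟨s.val + hs.choose, hs.choose_spec.1.end_lt⟩)
    (fun s hs => hs.choose_spec.1.mem_dropsFrom hs.choose_spec.2 rfl)
    (fun s s' hs hs' hss' => ?_) (fun i hi => ?_)
  · obtain ⟨h, hsl⟩ := hs.choose_spec
    obtain ⟨h', hsl'⟩ := hs'.choose_spec
    have hend : s.val + hs.choose = s'.val + hs'.choose := congrArg Fin.val hss'
    have hk := h.1
    have hk' := h'.1
    have hN := h.end_lt
    exact ((hrun h hsl).eq_of_mem (hrun h' hsl') (i := ⟨s.val + hs.choose - 1, by omega⟩)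
      (by simp; omega) (by simp; omega)).1
  · obtain ⟨hi, j, hji, hj⟩ := hi
    obtain ⟨s, k, hmax, hsk⟩ := exists_isMaximalRun_of_succ_not_mem (S := {i | f i = l})
      hj hi.ne hji
    have hsl : f s = l := hmax.mem le_rfl (Nat.lt_add_of_pos_right hmax.1)
    rcases honly s k hmax with ⟨-, -, -, -, hright⟩ | h
    · exact absurd (hsl ▸ hright i hsk.symm) hi.not_gt
    · have hs : ∃ k, IntMaxFlat f s k ∧ f s = l := ⟨k, h, hsl⟩
      have hk : hs.choose = k := (hrun hs.choose_spec.1 hsl).length_eq hmax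
      exact ⟨s, hs, Fin.ext (by simp [hk, hsk])⟩

end Level

theorem within_level_component_count {N : ℕ} {L : Type*} [LinearOrder L]
    (f : Fin N → L) (l : L) (kmin kmax : ℕ)
    -- every maximal flat of the level set at `l` is a flat local minimum or a
    -- flat interior local maximum (no other flats)
    (honly : ∀ s k, MaxlFlat f s k l → MinFlat f s k ∨ IntMaxFlat f s k)
    (hkmin : kmin = Nat.card {s : Fin N // ∃ k, MinFlat f s k ∧ f s = l})
    (hkmax : kmax = Nat.card {s : Fin N // ∃ k, IntMaxFlat f s k ∧ f s = l}) :
    {C : Set (Fin N) | IsConnComp {i | f i ≤ l} C}.ncard =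
      {C : Set (Fin N) | IsConnComp {i | f i < l} C}.ncard + kmin - kmax := by
  rw [ncard_setOf_isConnComp, ncard_setOf_isConnComp, runStarts_setOf_le, runStarts_setOf_lt,
    Set.ncard_union_eq (disjoint_dropsAcross_dropsOnto f l),
    Set.ncard_union_eq (disjoint_dropsAcross_dropsFrom f l), dropsOnto_eq honly,
    ncard_dropsFrom honly, hkmin.trans (Nat.card_coe_set_eq {s | ∃ k, MinFlat f s k ∧ f s = l}),
    hkmax.trans (Nat.card_coe_set_eq {s | ∃ k, IntMaxFlat f s k ∧ f s = l})]
  omega
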